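/- arXiv:1107.3033 — 2 statements merged into one kernel-verified Lean document; each statement's English description precedes it below -/
import Mathlib

section
/- The generating function of secondary structures satisfies the functional equation T(z) = z + z·T(z) + z²·T(z) + z²·T(z)² as an identity of formal power series over ℚ. -/
open PowerSeries

/-- `P` is a valid secondary structure on positions `1..n`. -/
def IsSecStruct (n : ℕ) (P : Finset (ℕ × ℕ)) : Prop :=
  (∀ q ∈ P, 1 ≤ q.1 ∧ q.1 + 2 ≤ q.2 ∧ q.2 ≤ n) ∧
  (∀ q ∈ P, ∀ r ∈ P, q ≠ r → q.1 ≠ r.1 ∧ q.1 ≠ r.2 ∧ q.2 ≠ r.1 ∧ q.2 ≠ r.2) ∧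
  (∀ q ∈ P, ∀ r ∈ P, ¬(q.1 < r.1 ∧ r.1 < q.2 ∧ q.2 < r.2))

/-- `P` is a saturated secondary structure on positions `1..n`. -/
def IsSaturated (n : ℕ) (P : Finset (ℕ × ℕ)) : Prop :=
  IsSecStruct n P ∧ ∀ q : ℕ × ℕ, q ∉ P → ¬ IsSecStruct n (insert q P)

/-- The dot-deleted bracket encoding φ(s) of a structure, `true` = '(', `false` = ')'. -/
def encodeStruct (n : ℕ) (P : Finset (ℕ × ℕ)) : List Bool :=
  ((List.range n).map (· + 1)).filterMap fun i =>
    if (P.filter fun q => q.1 = i).Nonempty then some true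
    else if (P.filter fun q => q.2 = i).Nonempty then some false
    else none

/-- Run-length encoding of a boolean word. -/
def runsRLE : List Bool → List (Bool × ℕ)
  | [] => []
  | b :: l =>
    match runsRLE l with
    | [] => [(b, 1)]
    | (c, k) :: r => if b = c then (c, k + 1) :: r else (b, 1) :: (c, k) :: r

def flattenRLE : List (Bool × ℕ) → List Bool
  | [] => []
  | (b, k) :: r => List.replicate k b ++ flattenRLE r

/-- Simultaneously delete all maximal hairpins `(^k)^k`, operating on run-length encodings:
at every boundary between a run of `a` opening and `b` closing brackets, `min a b`
brackets are removed on both sides. -/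
def hairpinStepRLE : List (Bool × ℕ) → List (Bool × ℕ)
  | (true, a) :: (false, b) :: r =>
      (true, a - min a b) :: (false, b - min a b) :: hairpinStepRLE r
  | x :: r => x :: hairpinStepRLE r
  | [] => []

/-- One parallel round of deleting all maximal substrings of the form `(^k)^k`. -/
def hairpinStep (s : List Bool) : List Bool := flattenRLE (hairpinStepRLE (runsRLE s))

/-- The order of a structure: the least number of parallel hairpin-deletion rounds needed
to reduce the dot-deleted encoding to the empty word. -/
noncomputable def structOrder (n : ℕ) (P : Finset (ℕ × ℕ)) : ℕ :=
  sInf {p : ℕ | hairpinStep^[p] (encodeStruct n P) = []}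

/-- `T(n)`: the number of secondary structures of size `n`. -/
noncomputable def secCount (n : ℕ) : ℕ :=
  {P : Finset (ℕ × ℕ) | IsSecStruct n P}.ncard

/-- `S(n)`: the number of saturated secondary structures of size `n`. -/
noncomputable def satCount (n : ℕ) : ℕ :=
  {P : Finset (ℕ × ℕ) | IsSaturated n P}.ncard

/-- `S_p(n)`: the number of saturated secondary structures of size `n` of order `≥ p`. -/
noncomputable def satOrderCount (n p : ℕ) : ℕ :=
  {P : Finset (ℕ × ℕ) | IsSaturated n P ∧ p ≤ structOrder n P}.ncard

/-- The number of saturated secondary structures of size `n` of order `≤ p`. -/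
noncomputable def satOrderLeCount (n p : ℕ) : ℕ :=
  {P : Finset (ℕ × ℕ) | IsSaturated n P ∧ structOrder n P ≤ p}.ncard

/-- `R(n)`: saturated secondary structures of size `n` with `(1,n)` a base pair. -/
noncomputable def RCount (n : ℕ) : ℕ :=
  {P : Finset (ℕ × ℕ) | IsSaturated n P ∧ (1, n) ∈ P}.ncard

/-- `R_p(n)`: saturated structures of size `n` with `(1,n)` a base pair and order `≥ p`. -/
noncomputable def ROrderCount (n p : ℕ) : ℕ :=
  {P : Finset (ℕ × ℕ) | IsSaturated n P ∧ (1, n) ∈ P ∧ p ≤ structOrder n P}.ncard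

/-- `T(z) = ∑_{n≥1} T(n) zⁿ`. -/
noncomputable def Tgf : PowerSeries ℚ :=
  PowerSeries.mk fun n => if n = 0 then 0 else (secCount n : ℚ)

/-- `S(z) = ∑_{n≥1} S(n) zⁿ`. -/
noncomputable def Sgf : PowerSeries ℚ :=
  PowerSeries.mk fun n => if n = 0 then 0 else (satCount n : ℚ)

/-- `S_p(z) = ∑_{n≥1} S_p(n) zⁿ`. -/
noncomputable def Spgf (p : ℕ) : PowerSeries ℚ :=
  PowerSeries.mk fun n => if n = 0 then 0 else (satOrderCount n p : ℚ)

/-- `R_p(z) = ∑_{n≥1} R_p(n) zⁿ`. -/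
noncomputable def Rpgf (p : ℕ) : PowerSeries ℚ :=
  PowerSeries.mk fun n => if n = 0 then 0 else (ROrderCount n p : ℚ)

/-- `R(z) = ∑_{n≥1} R(n) zⁿ`. -/
noncomputable def Rgf : PowerSeries ℚ :=
  PowerSeries.mk fun n => if n = 0 then 0 else (RCount n : ℚ)

/-- Real coefficient sequence of `S_p(z)`. -/
noncomputable def SpCoeff (p n : ℕ) : ℝ := if n = 0 then 0 else (satOrderCount n p : ℝ)

/-- Real coefficient sequence of `R_p(z)`. -/
noncomputable def RpCoeff (p n : ℕ) : ℝ := if n = 0 then 0 else (ROrderCount n p : ℝ)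

/-- `ρ` is the radius of convergence of `∑ a(n) zⁿ`. -/
def IsRadiusOf (a : ℕ → ℝ) (ρ : ℝ) : Prop :=
  (∀ z : ℂ, ‖z‖ < ρ → Summable fun n => (a n : ℂ) * z ^ n) ∧
  (∀ z : ℂ, ρ < ‖z‖ → ¬ Summable fun n => (a n : ℂ) * z ^ n)

/-- `E ξ_n = ∑_{p ≥ 1} S_p(n)/S(n)`. -/
noncomputable def Exi (n : ℕ) : ℝ :=
  ∑' p : ℕ, (satOrderCount n (p + 1) : ℝ) / (satCount n : ℝ)

/-- `P(ξ_n = p) = (S_p(n) − S_{p+1}(n))/S(n)`. -/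
noncomputable def probXi (n p : ℕ) : ℝ :=
  ((satOrderCount n p : ℝ) - (satOrderCount n (p + 1) : ℝ)) / (satCount n : ℝ)

/-- The Δ-domain `Δ_{z₀}(M,φ)`. -/
def DeltaDomain (z₀ M φ : ℝ) : Set ℂ :=
  {z : ℂ | ‖z‖ < M ∧ z ≠ (z₀ : ℂ) ∧ φ < |Complex.arg (z - (z₀ : ℂ))|}

/-- The domain `U_{z₀}(ε,φ)`, the part of a Δ-domain near `z₀`. -/
def UDomain (z₀ ε φ : ℝ) : Set ℂ :=
  {z : ℂ | 0 < ‖z - (z₀ : ℂ)‖ ∧ ‖z - (z₀ : ℂ)‖ < ε ∧ φ < |Complex.arg (z - (z₀ : ℂ))|}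

/-- `F` is a family of analytic continuations, to Δ-domains, of the series with
coefficients `a p ·`. -/
def IsContinuationFamily (ρ M : ℝ) (a : ℕ → ℕ → ℝ) (F : ℕ → ℂ → ℂ) : Prop :=
  ∀ p : ℕ,
    (∀ φ : ℝ, 0 < φ → φ < Real.pi / 2 → AnalyticOnNhd ℂ (F p) (DeltaDomain ρ M φ)) ∧
    (∀ z : ℂ, ‖z‖ < ρ → F p z = ∑' n : ℕ, (a p n : ℂ) * z ^ n)

/-- `P_R = ∂P/∂R` evaluated at `(z, R)`. -/
noncomputable def PRval (R z : ℂ) : ℂ := 3 * R ^ 2 + 2 * (z ^ 2 - 2) * R + (1 - z ^ 2)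

/-- `a₂ = −3R + 3R² + 3Rz² − z²`. -/
noncomputable def a2val (R z : ℂ) : ℂ := -3 * R + 3 * R ^ 2 + 3 * R * z ^ 2 - z ^ 2

/-- The recurring quantity `P_R·(R−1)/a₂`. -/
noncomputable def wval (R z : ℂ) : ℂ := PRval R z * (R - 1) / a2val R z

/-- `p_M(z) = max{p : |P_R·(R−1)| ≤ |a₂·R_p(z)/4|}`. -/
noncomputable def pMval (Rc : ℕ → ℂ → ℂ) (z : ℂ) : ℕ :=
  sSup {p : ℕ | ‖PRval (Rc 1 z) z * (Rc 1 z - 1)‖ ≤ ‖a2val (Rc 1 z) z * Rc p z / 4‖}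


/-- Secondary structure on the interval `[a, b]`. -/
def IsSub (a b : ℕ) (P : Finset (ℕ × ℕ)) : Prop :=
  (∀ q ∈ P, a ≤ q.1 ∧ q.1 + 2 ≤ q.2 ∧ q.2 ≤ b) ∧
  (∀ q ∈ P, ∀ r ∈ P, q ≠ r → q.1 ≠ r.1 ∧ q.1 ≠ r.2 ∧ q.2 ≠ r.1 ∧ q.2 ≠ r.2) ∧
  (∀ q ∈ P, ∀ r ∈ P, ¬(q.1 < r.1 ∧ r.1 < q.2 ∧ q.2 < r.2))

lemma isSecStruct_iff_isSub {n : ℕ} {P : Finset (ℕ × ℕ)} :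
    IsSecStruct n P ↔ IsSub 1 n P := Iff.rfl

open scoped Classical in
noncomputable def SF (a b : ℕ) : Finset (Finset (ℕ × ℕ)) :=
  ((Finset.range (b+1) ×ˢ Finset.range (b+1)).powerset).filter (fun P => IsSub a b P)

lemma mem_SF {a b : ℕ} {P : Finset (ℕ × ℕ)} : P ∈ SF a b ↔ IsSub a b P := by
  classical
  simp only [SF, Finset.mem_filter, Finset.mem_powerset, and_iff_right_iff_imp]
  intro h q hq
  have h1 := h.1 q hq
  simp only [Finset.mem_product, Finset.mem_range]
  omega

lemma secCount_eq (n : ℕ) : secCount n = (SF 1 n).card := by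
  have h : {P : Finset (ℕ × ℕ) | IsSecStruct n P} = ↑(SF 1 n) := by
    ext P
    simp [mem_SF, isSecStruct_iff_isSub]
  rw [secCount, h, Set.ncard_coe_finset]

lemma secCount_zero : secCount 0 = 1 := by
  have h : {P : Finset (ℕ × ℕ) | IsSecStruct 0 P} = {(∅ : Finset (ℕ × ℕ))} := by
    ext P
    simp only [Set.mem_setOf_eq, Set.mem_singleton_iff]
    constructor
    · intro hP
      rw [Finset.eq_empty_iff_forall_notMem]
      intro q hq
      have := hP.1 q hq
      omega
    · rintro rfl
      refine ⟨?_, ?_, ?_⟩ <;> simp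
  rw [secCount, h, Set.ncard_singleton]

lemma SF_card_shift (a b : ℕ) (ha : 1 ≤ a) (hab : a ≤ b + 1) :
    (SF a b).card = secCount (b + 1 - a) := by
  rw [secCount_eq]
  set d := a - 1 with hd
  apply Finset.card_bij (fun P _ => P.image (fun q => (q.1 - d, q.2 - d)))
  · -- maps into SF 1 (b+1-a)
    intro P hP
    rw [mem_SF] at hP ⊢
    obtain ⟨hb, hdis, hcr⟩ := hP
    refine ⟨?_, ?_, ?_⟩
    · intro q hq
      simp only [Finset.mem_image] at hq
      obtain ⟨r, hr, rfl⟩ := hq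
      have := hb r hr
      simp only
      omega
    · intro q hq r hr hne
      simp only [Finset.mem_image] at hq hr
      obtain ⟨q', hq', rfl⟩ := hq
      obtain ⟨r', hr', rfl⟩ := hr
      have hq'b := hb q' hq'
      have hr'b := hb r' hr'
      have hne' : q' ≠ r' := by rintro rfl; exact hne rfl
      have := hdis q' hq' r' hr' hne'
      simp only
      omega
    · intro q hq r hr
      simp only [Finset.mem_image] at hq hr
      obtain ⟨q', hq', rfl⟩ := hq
      obtain ⟨r', hr', rfl⟩ := hr
      have hq'b := hb q' hq'
      have hr'b := hb r' hr'
      have := hcr q' hq' r' hr'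
      simp only
      omega
  · -- injective
    intro P₁ h₁ P₂ h₂ heq
    rw [mem_SF] at h₁ h₂
    ext q
    constructor
    · intro hq
      have : (q.1 - d, q.2 - d) ∈ P₂.image (fun q => (q.1 - d, q.2 - d)) := by
        rw [← heq]; exact Finset.mem_image_of_mem _ hq
      simp only [Finset.mem_image] at this
      obtain ⟨r, hr, hrq⟩ := this
      have hqb := h₁.1 q hq
      have hrb := h₂.1 r hr
      have : r = q := by
        have h1 : r.1 - d = q.1 - d := congrArg Prod.fst hrq
        have h2 : r.2 - d = q.2 - d := congrArg Prod.snd hrq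
        have : r.1 = q.1 := by omega
        have : r.2 = q.2 := by omega
        exact Prod.ext (by omega) (by omega)
      rwa [← this]
    · intro hq
      have : (q.1 - d, q.2 - d) ∈ P₁.image (fun q => (q.1 - d, q.2 - d)) := by
        rw [heq]; exact Finset.mem_image_of_mem _ hq
      simp only [Finset.mem_image] at this
      obtain ⟨r, hr, hrq⟩ := this
      have hqb := h₂.1 q hq
      have hrb := h₁.1 r hr
      have : r = q := by
        have h1 : r.1 - d = q.1 - d := congrArg Prod.fst hrq
        have h2 : r.2 - d = q.2 - d := congrArg Prod.snd hrq
        exact Prod.ext (by omega) (by omega)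
      rwa [← this]
  · -- surjective
    intro Q hQ
    rw [mem_SF] at hQ
    obtain ⟨hb, hdis, hcr⟩ := hQ
    refine ⟨Q.image (fun q => (q.1 + d, q.2 + d)), ?_, ?_⟩
    · rw [mem_SF]
      refine ⟨?_, ?_, ?_⟩
      · intro q hq
        simp only [Finset.mem_image] at hq
        obtain ⟨r, hr, rfl⟩ := hq
        have := hb r hr
        simp only
        omega
      · intro q hq r hr hne
        simp only [Finset.mem_image] at hq hr
        obtain ⟨q', hq', rfl⟩ := hq
        obtain ⟨r', hr', rfl⟩ := hr
        have hne' : q' ≠ r' := by rintro rfl; exact hne rfl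
        have := hdis q' hq' r' hr' hne'
        simp only
        omega
      · intro q hq r hr
        simp only [Finset.mem_image] at hq hr
        obtain ⟨q', hq', rfl⟩ := hq
        obtain ⟨r', hr', rfl⟩ := hr
        have := hcr q' hq' r' hr'
        simp only
        omega
    · rw [Finset.image_image]
      have : Q.image ((fun q : ℕ × ℕ => (q.1 - d, q.2 - d)) ∘ (fun q => (q.1 + d, q.2 + d)))
          = Q.image id := by
        apply Finset.image_congr
        intro q _
        simp only [Function.comp_apply, id_eq]
        exact Prod.ext (by simp) (by simp)
      rw [this, Finset.image_id]

/-- partner of position 1 (0 if unpaired). -/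
def pf (P : Finset (ℕ × ℕ)) : ℕ := (P.filter (fun q => q.1 = 1)).sum Prod.snd

lemma filter_first_eq (h : IsSub 1 n P) (hk : (1, k) ∈ P) :
    P.filter (fun q => q.1 = 1) = {(1, k)} := by
  ext q
  simp only [Finset.mem_filter, Finset.mem_singleton]
  constructor
  · rintro ⟨hq, h1⟩
    by_contra hne
    exact (h.2.1 q hq (1, k) hk hne).1 (by simpa using h1)
  · rintro rfl
    exact ⟨hk, rfl⟩

lemma pf_eq_of_mem (h : IsSub 1 n P) (hk : (1, k) ∈ P) : pf P = k := by
  rw [pf, filter_first_eq h hk, Finset.sum_singleton]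

lemma pf_eq_zero_iff (h : IsSub 1 n P) : pf P = 0 ↔ ∀ q ∈ P, q.1 ≠ 1 := by
  constructor
  · intro h0 q hq hq1
    have hmem : (1, q.2) ∈ P := by
      have : q = (1, q.2) := Prod.ext hq1 rfl
      rwa [← this]
    have := pf_eq_of_mem h hmem
    have hb := h.1 q hq
    omega
  · intro hall
    have : P.filter (fun q => q.1 = 1) = ∅ := by
      rw [Finset.filter_eq_empty_iff]
      exact fun q hq => hall q hq
    rw [pf, this, Finset.sum_empty]

lemma pf_mem_of_ne_zero (h : IsSub 1 n P) (h0 : pf P ≠ 0) : (1, pf P) ∈ P := by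
  by_cases hall : ∀ q ∈ P, q.1 ≠ 1
  · exact absurd ((pf_eq_zero_iff h).2 hall) h0
  · push_neg at hall
    obtain ⟨q, hq, hq1⟩ := hall
    have hmem : (1, q.2) ∈ P := by
      have : q = (1, q.2) := Prod.ext hq1 rfl
      rwa [← this]
    have := pf_eq_of_mem h hmem
    rw [this]
    exact hmem

lemma pf_eq_iff (h : IsSub 1 n P) (hk : k ≠ 0) : pf P = k ↔ (1, k) ∈ P := by
  constructor
  · intro hpf
    rw [← hpf]
    exact pf_mem_of_ne_zero h (hpf ▸ hk)
  · exact pf_eq_of_mem h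

/-- every non-root pair is nested inside or lies outside `(1,k)`. -/
lemma mem_split (h : IsSub 1 n P) (hk : (1, k) ∈ P) {q : ℕ × ℕ} (hq : q ∈ P)
    (hne : q ≠ (1, k)) : (2 ≤ q.1 ∧ q.2 + 1 ≤ k) ∨ (k + 1 ≤ q.1) := by
  have hb := h.1 q hq
  have hd := h.2.1 q hq (1, k) hk hne
  have hc := h.2.2 (1, k) hk q hq
  simp only [Prod.fst, Prod.snd] at hd hc
  omega

section
variable {n k : ℕ} {P Q Q' : Finset (ℕ × ℕ)}
lemma decomp (h : IsSub 1 n P) (hk : (1, k) ∈ P) :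
    P = insert (1, k) (P.filter (fun q => q.2 < k) ∪ P.filter (fun q => k < q.1)) := by
  ext q
  simp only [Finset.mem_insert, Finset.mem_union, Finset.mem_filter]
  constructor
  · intro hq
    by_cases hne : q = (1, k)
    · exact Or.inl hne
    · rcases mem_split h hk hq hne with h1 | h2
      · exact Or.inr (Or.inl ⟨hq, by omega⟩)
      · exact Or.inr (Or.inr ⟨hq, by omega⟩)
  · rintro (rfl | ⟨hq, _⟩ | ⟨hq, _⟩)
    · exact hk
    · exact hq
    · exact hq

lemma inside_isSub (h : IsSub 1 n P) (hk : (1, k) ∈ P) :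
    IsSub 2 (k - 1) (P.filter (fun q => q.2 < k)) := by
  refine ⟨?_, ?_, ?_⟩
  · intro q hq
    rw [Finset.mem_filter] at hq
    obtain ⟨hqP, hq2⟩ := hq
    have hb := h.1 q hqP
    have hne : q ≠ (1, k) := by
      intro heq
      rw [heq] at hq2
      simp only [Prod.snd] at hq2
      omega
    rcases mem_split h hk hqP hne with h1 | h2 <;> omega
  · intro q hq r hr hne
    rw [Finset.mem_filter] at hq hr
    exact h.2.1 q hq.1 r hr.1 hne
  · intro q hq r hr
    rw [Finset.mem_filter] at hq hr
    exact h.2.2 q hq.1 r hr.1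

lemma outside_isSub (h : IsSub 1 n P) :
    IsSub (k + 1) n (P.filter (fun q => k < q.1)) := by
  refine ⟨?_, ?_, ?_⟩
  · intro q hq
    rw [Finset.mem_filter] at hq
    have hb := h.1 q hq.1
    omega
  · intro q hq r hr hne
    rw [Finset.mem_filter] at hq hr
    exact h.2.1 q hq.1 r hr.1 hne
  · intro q hq r hr
    rw [Finset.mem_filter] at hq hr
    exact h.2.2 q hq.1 r hr.1

lemma isSub_insert (hk3 : 3 ≤ k) (hkn : k ≤ n)
    (hQ : IsSub 2 (k - 1) Q) (hQ' : IsSub (k + 1) n Q') :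
    IsSub 1 n (insert (1, k) (Q ∪ Q')) := by
  have memP : ∀ q : ℕ × ℕ, q ∈ insert (1, k) (Q ∪ Q') ↔ q = (1, k) ∨ q ∈ Q ∨ q ∈ Q' := by
    intro q
    simp [Finset.mem_insert, Finset.mem_union]
  refine ⟨?_, ?_, ?_⟩
  · intro q hq
    rcases (memP q).1 hq with rfl | h | h
    · simp only [Prod.fst, Prod.snd]; omega
    · have := hQ.1 q h; omega
    · have := hQ'.1 q h; omega
  · intro q hq r hr hne
    rcases (memP q).1 hq with rfl | hq1 | hq1 <;>
      rcases (memP r).1 hr with heq | hr1 | hr1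
    · exact absurd heq.symm hne
    · have := hQ.1 r hr1; simp only [Prod.fst, Prod.snd]; omega
    · have := hQ'.1 r hr1; simp only [Prod.fst, Prod.snd]; omega
    · subst heq; have := hQ.1 q hq1; simp only [Prod.fst, Prod.snd]; omega
    · exact hQ.2.1 q hq1 r hr1 hne
    · have h1 := hQ.1 q hq1; have h2 := hQ'.1 r hr1; omega
    · subst heq; have := hQ'.1 q hq1; simp only [Prod.fst, Prod.snd]; omega
    · have h1 := hQ'.1 q hq1; have h2 := hQ.1 r hr1; omega
    · exact hQ'.2.1 q hq1 r hr1 hne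
  · intro q hq r hr
    rcases (memP q).1 hq with rfl | hq1 | hq1 <;>
      rcases (memP r).1 hr with heq | hr1 | hr1
    · subst heq; simp only [Prod.fst, Prod.snd]; omega
    · have := hQ.1 r hr1; simp only [Prod.fst, Prod.snd]; omega
    · have := hQ'.1 r hr1; simp only [Prod.fst, Prod.snd]; omega
    · subst heq; have := hQ.1 q hq1; simp only [Prod.fst, Prod.snd]; omega
    · exact hQ.2.2 q hq1 r hr1
    · have h1 := hQ.1 q hq1; have h2 := hQ'.1 r hr1; omega
    · subst heq; have := hQ'.1 q hq1; simp only [Prod.fst, Prod.snd]; omega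
    · have h1 := hQ'.1 q hq1; have h2 := hQ.1 r hr1; omega
    · exact hQ'.2.2 q hq1 r hr1

lemma filter_insert_inside (hk3 : 3 ≤ k)
    (hQ : IsSub 2 (k - 1) Q) (hQ' : IsSub (k + 1) n Q') :
    (insert (1, k) (Q ∪ Q')).filter (fun q => q.2 < k) = Q := by
  ext q
  simp only [Finset.mem_filter, Finset.mem_insert, Finset.mem_union]
  constructor
  · rintro ⟨rfl | h | h, hlt⟩
    · simp only [Prod.snd] at hlt; omega
    · exact h
    · have := hQ'.1 q h; omega
  · intro h
    have := hQ.1 q h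
    exact ⟨Or.inr (Or.inl h), by omega⟩

lemma filter_insert_outside (hk3 : 3 ≤ k)
    (hQ : IsSub 2 (k - 1) Q) (hQ' : IsSub (k + 1) n Q') :
    (insert (1, k) (Q ∪ Q')).filter (fun q => k < q.1) = Q' := by
  ext q
  simp only [Finset.mem_filter, Finset.mem_insert, Finset.mem_union]
  constructor
  · rintro ⟨rfl | h | h, hlt⟩
    · simp only [Prod.fst] at hlt; omega
    · have := hQ.1 q h; omega
    · exact h
  · intro h
    have := hQ'.1 q h
    exact ⟨Or.inr (Or.inr h), by omega⟩

end

open scoped Classical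

lemma fiber0_eq (n : ℕ) : (SF 1 n).filter (fun P => pf P = 0) = SF 2 n := by
  ext P
  simp only [Finset.mem_filter, mem_SF]
  constructor
  · rintro ⟨h, h0⟩
    have hall := (pf_eq_zero_iff h).1 h0
    refine ⟨?_, h.2.1, h.2.2⟩
    intro q hq
    have := h.1 q hq
    have := hall q hq
    omega
  · intro h
    have h1 : IsSub 1 n P := by
      refine ⟨?_, h.2.1, h.2.2⟩
      intro q hq
      have := h.1 q hq
      omega
    refine ⟨h1, (pf_eq_zero_iff h1).2 ?_⟩
    intro q hq
    have := h.1 q hq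
    omega

lemma card_fiber (n k : ℕ) (hk3 : 3 ≤ k) (hkn : k ≤ n) :
    ((SF 1 n).filter (fun P => pf P = k)).card = secCount (k - 2) * secCount (n - k) := by
  have hmem : ∀ P, P ∈ (SF 1 n).filter (fun P => pf P = k) ↔ IsSub 1 n P ∧ (1, k) ∈ P := by
    intro P
    simp only [Finset.mem_filter, mem_SF]
    constructor
    · rintro ⟨h, hpf⟩
      exact ⟨h, (pf_eq_iff h (by omega)).1 hpf⟩
    · rintro ⟨h, hk'⟩
      exact ⟨h, (pf_eq_iff h (by omega)).2 hk'⟩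
  have h1 : (SF 2 (k-1)).card = secCount (k - 2) := by
    have := SF_card_shift 2 (k-1) (by omega) (by omega)
    rwa [show k - 1 + 1 - 2 = k - 2 by omega] at this
  have h2 : (SF (k+1) n).card = secCount (n - k) := by
    have := SF_card_shift (k+1) n (by omega) (by omega)
    rwa [show n + 1 - (k + 1) = n - k by omega] at this
  rw [← h1, ← h2, ← Finset.card_product]
  apply Finset.card_bij
    (fun P _ => (P.filter (fun q => q.2 < k), P.filter (fun q => k < q.1)))
  · intro P hP
    rw [hmem] at hP
    rw [Finset.mem_product, mem_SF, mem_SF]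
    exact ⟨inside_isSub hP.1 hP.2, outside_isSub hP.1⟩
  · intro P₁ h₁ P₂ h₂ heq
    rw [hmem] at h₁ h₂
    have e1 := congrArg Prod.fst heq
    have e2 := congrArg Prod.snd heq
    simp only at e1 e2
    rw [decomp h₁.1 h₁.2, e1, e2, ← decomp h₂.1 h₂.2]
  · rintro ⟨Q, Q'⟩ hQQ
    rw [Finset.mem_product, mem_SF, mem_SF] at hQQ
    obtain ⟨hQ, hQ'⟩ := hQQ
    refine ⟨insert (1, k) (Q ∪ Q'), ?_, ?_⟩
    · rw [hmem]
      exact ⟨isSub_insert hk3 hkn hQ hQ', Finset.mem_insert_self _ _⟩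
    · rw [Prod.mk.injEq]
      exact ⟨filter_insert_inside hk3 hQ hQ', filter_insert_outside hk3 hQ hQ'⟩

lemma secCount_rec (n : ℕ) (hn : 1 ≤ n) :
    secCount n = secCount (n - 1) +
      ∑ k ∈ Finset.Icc 3 n, secCount (k - 2) * secCount (n - k) := by
  rw [secCount_eq]
  rw [Finset.card_eq_sum_card_fiberwise (f := pf) (t := insert 0 (Finset.Icc 3 n)) ?hmap]
  case hmap =>
    intro P hP
    rw [Finset.mem_coe, mem_SF] at hP
    by_cases h0 : pf P = 0
    · simp [h0]
    · have hmem := pf_mem_of_ne_zero hP h0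
      have := hP.1 _ hmem
      simp only [Prod.fst, Prod.snd] at this
      simp only [Finset.coe_insert, Set.mem_insert_iff, Finset.mem_coe, Finset.mem_Icc]
      omega
  rw [Finset.sum_insert (by simp)]
  congr 1
  · rw [fiber0_eq]
    have := SF_card_shift 2 n (by omega) (by omega)
    rwa [show n + 1 - 2 = n - 1 by omega] at this
  · apply Finset.sum_congr rfl
    intro k hk
    rw [Finset.mem_Icc] at hk
    exact card_fiber n k hk.1 hk.2

/-- ℕ-valued coefficient sequence of `Tgf`. -/
noncomputable def tn (i : ℕ) : ℕ := if i = 0 then 0 else secCount i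

lemma coeff_Tgf (i : ℕ) : (coeff i) Tgf = (tn i : ℚ) := by
  rw [Tgf, coeff_mk, tn]
  split <;> simp

lemma key (m : ℕ) :
    secCount (m + 2) = secCount (m + 1) + tn m +
      ∑ i ∈ Finset.range (m + 1), tn i * tn (m - i) := by
  have hreindex : ∑ k ∈ Finset.Icc 3 (m + 2), secCount (k - 2) * secCount (m + 2 - k)
      = ∑ i ∈ Finset.Icc 1 m, secCount i * secCount (m - i) := by
    rw [← Finset.map_add_right_Icc 1 m 2, Finset.sum_map]
    apply Finset.sum_congr rfl
    intro i hi
    rw [Finset.mem_Icc] at hi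
    simp only [addRightEmbedding_apply]
    congr 1 <;> congr 1 <;> omega
  have hmain : ∑ k ∈ Finset.Icc 3 (m + 2), secCount (k - 2) * secCount (m + 2 - k)
      = tn m + ∑ i ∈ Finset.range (m + 1), tn i * tn (m - i) := by
    rw [hreindex]
    match m with
    | 0 => simp [tn]
    | (m' + 1) =>
      rw [Finset.sum_Icc_succ_top (by omega), Finset.sum_range_succ]
      have h1 : secCount (m' + 1) * secCount (m' + 1 - (m' + 1)) = secCount (m' + 1) := by
        simp [secCount_zero]
      have h2 : tn (m' + 1) * tn (m' + 1 - (m' + 1)) = 0 := by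
        simp [tn]
      have h3 : ∑ i ∈ Finset.range (m' + 1), tn i * tn (m' + 1 - i)
          = ∑ i ∈ Finset.Icc 1 m', secCount i * secCount (m' + 1 - i) := by
        rw [← Finset.sum_subset (s₁ := Finset.Icc 1 m')
          (by intro i hi; rw [Finset.mem_Icc] at hi; rw [Finset.mem_range]; omega)
          (by
            intro i hi hni
            rw [Finset.mem_range] at hi
            rw [Finset.mem_Icc] at hni
            have : i = 0 := by omega
            subst this
            simp [tn])]
        apply Finset.sum_congr rfl
        intro i hi
        rw [Finset.mem_Icc] at hi
        have e1 : tn i = secCount i := by rw [tn]; split <;> [omega; rfl]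
        have e2 : tn (m' + 1 - i) = secCount (m' + 1 - i) := by
          rw [tn]; split <;> [omega; rfl]
        rw [e1, e2]
      have h4 : tn (m' + 1) = secCount (m' + 1) := by rw [tn]; split <;> [omega; rfl]
      rw [h1, h2, h3, h4]
      ring
  rw [secCount_rec (m + 2) (by omega), show m + 2 - 1 = m + 1 by omega, hmain]
  ring


/-- the generating function of secondary structures satisfies
`T(z) = z + z·T(z) + z²·T(z) + z²·T(z)²` as formal power series over ℚ. -/
theorem sec_struct_functional_equation :
    Tgf = (X : PowerSeries ℚ) + X * Tgf + X ^ 2 * Tgf + X ^ 2 * Tgf ^ 2 := by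
  have hs1 : secCount 1 = 1 := by
    have h := secCount_rec 1 (le_refl 1)
    rw [show Finset.Icc 3 1 = ∅ from Finset.Icc_eq_empty (by omega),
      Finset.sum_empty, secCount_zero] at h
    omega
  have hX2 : ∀ (f : PowerSeries ℚ) (m : ℕ), (coeff (m + 2)) (X ^ 2 * f) = coeff m f := by
    intro f m
    rw [pow_two, mul_assoc, show m + 2 = (m + 1) + 1 from rfl,
      coeff_succ_X_mul, coeff_succ_X_mul]
  ext n
  rw [map_add, map_add, map_add]
  match n with
  | 0 =>
    simp [Tgf, PowerSeries.coeff_zero_eq_constantCoeff, map_mul, map_pow]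
  | 1 =>
    have e1 : (coeff 1) (X * Tgf) = coeff 0 Tgf := coeff_succ_X_mul 0 Tgf
    have e2 : (coeff 1) (X ^ 2 * Tgf) = 0 := by
      rw [pow_two, mul_assoc, show (1 : ℕ) = 0 + 1 from rfl, coeff_succ_X_mul]
      simp [PowerSeries.coeff_zero_eq_constantCoeff, map_mul]
    have e3 : (coeff 1) (X ^ 2 * Tgf ^ 2) = 0 := by
      rw [pow_two, mul_assoc, show (1 : ℕ) = 0 + 1 from rfl, coeff_succ_X_mul]
      simp [PowerSeries.coeff_zero_eq_constantCoeff, map_mul]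
    rw [e1, e2, e3, coeff_Tgf, coeff_Tgf, coeff_one_X]
    simp [tn, hs1]
  | (m + 2) =>
    have e0 : (coeff (m + 2)) (X : PowerSeries ℚ) = 0 := by
      rw [coeff_X]; simp
    have e1 : (coeff (m + 2)) (X * Tgf) = (tn (m + 1) : ℚ) := by
      rw [show m + 2 = (m + 1) + 1 from rfl, coeff_succ_X_mul, coeff_Tgf]
    have e2 : (coeff (m + 2)) (X ^ 2 * Tgf) = (tn m : ℚ) := by
      rw [hX2, coeff_Tgf]
    have e3 : (coeff (m + 2)) (X ^ 2 * Tgf ^ 2)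
        = ∑ i ∈ Finset.range (m + 1), (tn i : ℚ) * (tn (m - i) : ℚ) := by
      rw [hX2, pow_two, coeff_mul, Finset.Nat.sum_antidiagonal_eq_sum_range_succ_mk]
      apply Finset.sum_congr rfl
      intro i _
      rw [coeff_Tgf, coeff_Tgf]
    rw [e0, e1, e2, e3, coeff_Tgf]
    have h4 : tn (m + 2) = secCount (m + 2) := by rw [tn]; split <;> [omega; rfl]
    have h5 : tn (m + 1) = secCount (m + 1) := by rw [tn]; split <;> [omega; rfl]
    rw [h4, h5, key m]
    push_cast
    ring
end

section
/- The generating function S(z) of saturated secondary structures satisfies the algebraic equation −S(z)³·z⁴ − S(z)²·z²·(−2 + z²) + S(z)·(−1 + z²) + z·(1 + z) = 0 as an identity of formal power series over ℚ. -/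
open PowerSeries

namespace SatAux
open Finset

/-- Position `m` is exposed: unpaired and not covered by any arc. -/
def Expo (P : Finset (ℕ × ℕ)) (m : ℕ) : Prop :=
  (∀ q ∈ P, q.1 ≠ m ∧ q.2 ≠ m) ∧ ¬ ∃ q ∈ P, q.1 < m ∧ m < q.2

def NoExp (c : ℕ) (P : Finset (ℕ × ℕ)) : Prop := ∀ m, 1 ≤ m → m ≤ c → ¬ Expo P m

def SecOn (a b : ℕ) (P : Finset (ℕ × ℕ)) : Prop :=
  (∀ q ∈ P, a ≤ q.1 ∧ q.1 + 2 ≤ q.2 ∧ q.2 ≤ b) ∧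
  (∀ q ∈ P, ∀ r ∈ P, q ≠ r → q.1 ≠ r.1 ∧ q.1 ≠ r.2 ∧ q.2 ≠ r.1 ∧ q.2 ≠ r.2) ∧
  (∀ q ∈ P, ∀ r ∈ P, ¬(q.1 < r.1 ∧ r.1 < q.2 ∧ q.2 < r.2))

def SatOn (a b : ℕ) (P : Finset (ℕ × ℕ)) : Prop :=
  SecOn a b P ∧
    ∀ i j : ℕ, a ≤ i → i + 2 ≤ j → j ≤ b → (i, j) ∉ P → ¬ SecOn a b (insert (i, j) P)

theorem isSecStruct_iff {n : ℕ} {P : Finset (ℕ × ℕ)} : IsSecStruct n P ↔ SecOn 1 n P :=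
  Iff.rfl

theorem isSaturated_iff {n : ℕ} {P : Finset (ℕ × ℕ)} : IsSaturated n P ↔ SatOn 1 n P := by
  constructor
  · rintro ⟨h1, h2⟩
    exact ⟨h1, fun i j _ _ _ hnot => h2 (i, j) hnot⟩
  · rintro ⟨h1, h2⟩
    refine ⟨h1, fun q hq hsec => ?_⟩
    by_cases hb : 1 ≤ q.1 ∧ q.1 + 2 ≤ q.2 ∧ q.2 ≤ n
    · exact h2 q.1 q.2 hb.1 hb.2.1 hb.2.2 hq hsec
    · exact hb (hsec.1 q (Finset.mem_insert_self q P))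

theorem secOn_mono {a b a' b' : ℕ} {P : Finset (ℕ × ℕ)} (h : SecOn a b P)
    (ha : a' ≤ a) (hb : b ≤ b') : SecOn a' b' P :=
  ⟨fun q hq => ⟨le_trans ha (h.1 q hq).1, (h.1 q hq).2.1, le_trans (h.1 q hq).2.2 hb⟩,
    h.2.1, h.2.2⟩

theorem secOn_insert_iff {a b i j : ℕ} {P : Finset (ℕ × ℕ)} (h : SecOn a b P)
    (ha : a ≤ i) (h2 : i + 2 ≤ j) (hb : j ≤ b) (hne : (i, j) ∉ P) :
    SecOn a b (insert (i, j) P) ↔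
      (∀ q ∈ P, q.1 ≠ i ∧ q.2 ≠ i ∧ q.1 ≠ j ∧ q.2 ≠ j) ∧
      (∀ q ∈ P, ¬(i < q.1 ∧ q.1 < j ∧ j < q.2) ∧ ¬(q.1 < i ∧ i < q.2 ∧ q.2 < j)) := by
  constructor
  · intro hins
    have hmem : (i, j) ∈ insert (i, j) P := Finset.mem_insert_self _ _
    refine ⟨fun q hq => ?_, fun q hq => ?_⟩
    · have hne' : (i, j) ≠ q := fun h => hne (h ▸ hq)
      have hd := hins.2.1 (i, j) hmem q (Finset.mem_insert_of_mem hq) hne'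
      exact ⟨hd.1.symm, hd.2.1.symm, hd.2.2.1.symm, hd.2.2.2.symm⟩
    · exact ⟨hins.2.2 (i, j) hmem q (Finset.mem_insert_of_mem hq),
        hins.2.2 q (Finset.mem_insert_of_mem hq) (i, j) hmem⟩
  · rintro ⟨hd, hc⟩
    refine ⟨?_, ?_, ?_⟩
    · intro q hq
      rcases Finset.mem_insert.mp hq with rfl | hq'
      · exact ⟨ha, h2, hb⟩
      · exact h.1 q hq'
    · intro q hq r hr hqr
      rcases Finset.mem_insert.mp hq with rfl | hq' <;>
        rcases Finset.mem_insert.mp hr with rfl | hr'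
      · exact absurd rfl hqr
      · exact ⟨(hd r hr').1.symm, (hd r hr').2.1.symm, (hd r hr').2.2.1.symm,
          (hd r hr').2.2.2.symm⟩
      · exact ⟨(hd q hq').1, (hd q hq').2.2.1, (hd q hq').2.1, (hd q hq').2.2.2⟩
      · exact h.2.1 q hq' r hr' hqr
    · intro q hq r hr
      rcases Finset.mem_insert.mp hq with rfl | hq' <;>
        rcases Finset.mem_insert.mp hr with rfl | hr'
      · intro hx; exact absurd hx.1 (lt_irrefl _)
      · exact (hc r hr').1
      · exact (hc q hq').2
      · exact h.2.2 q hq' r hr'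

theorem secOn_subset {a b a' b' : ℕ} {P Q : Finset (ℕ × ℕ)} (h : SecOn a b P)
    (hsub : Q ⊆ P) (hbounds : ∀ q ∈ Q, a' ≤ q.1 ∧ q.2 ≤ b') : SecOn a' b' Q :=
  ⟨fun q hq => ⟨(hbounds q hq).1, (h.1 q (hsub hq)).2.1, (hbounds q hq).2⟩,
    fun q hq r hr => h.2.1 q (hsub hq) r (hsub hr),
    fun q hq r hr => h.2.2 q (hsub hq) r (hsub hr)⟩

theorem noExp_mono {c c' : ℕ} {P : Finset (ℕ × ℕ)} (h : NoExp c P) (hc : c' ≤ c) :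
    NoExp c' P := fun m h1 h2 => h m h1 (le_trans h2 hc)

theorem expo_not_both {a b i j : ℕ} {P : Finset (ℕ × ℕ)} (h : SatOn a b P)
    (hi : Expo P i) (hj : Expo P j) (hai : a ≤ i) (hij : i + 2 ≤ j) (hjb : j ≤ b) :
    False := by
  have hnp : (i, j) ∉ P := fun hm => (hi.1 (i, j) hm).1 rfl
  refine h.2 i j hai hij hjb hnp ?_
  rw [secOn_insert_iff h.1 hai hij hjb hnp]
  refine ⟨fun q hq => ⟨(hi.1 q hq).1, (hi.1 q hq).2, (hj.1 q hq).1, (hj.1 q hq).2⟩,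
    fun q hq => ⟨?_, ?_⟩⟩
  · rintro ⟨h1A, h2A, h3A⟩
    exact hj.2 ⟨q, hq, h2A, h3A⟩
  · rintro ⟨h1A, h2A, h3A⟩
    exact hi.2 ⟨q, hq, h1A, h2A⟩

theorem sat_last_unpaired {n : ℕ} {P : Finset (ℕ × ℕ)} (hn : 1 ≤ n)
    (hnp : ∀ q ∈ P, q.2 ≠ n) :
    SatOn 1 n P ↔ SatOn 1 (n - 1) P ∧ NoExp (n - 2) P := by
  constructor
  · rintro ⟨hsec, hsat⟩
    have hsec' : SecOn 1 (n - 1) P := by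
      refine ⟨fun q hq => ?_, hsec.2.1, hsec.2.2⟩
      have h1 := hsec.1 q hq
      have h2 := hnp q hq
      omega
    refine ⟨⟨hsec', fun i j hai h2 hjb hnot hins =>
      hsat i j hai h2 (by omega) hnot (secOn_mono hins le_rfl (by omega))⟩, ?_⟩
    intro m h1 hm hexp
    have hnotin : (m, n) ∉ P := fun hmm => (hexp.1 (m, n) hmm).1 rfl
    refine hsat m n h1 (by omega) le_rfl hnotin ?_
    rw [secOn_insert_iff hsec h1 (by omega) le_rfl hnotin]
    refine ⟨fun q hq => ?_, fun q hq => ⟨?_, ?_⟩⟩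
    · have hb := hsec.1 q hq
      exact ⟨(hexp.1 q hq).1, (hexp.1 q hq).2, by omega, hnp q hq⟩
    · rintro ⟨hA, hB, hC⟩
      have := hsec.1 q hq
      omega
    · rintro ⟨hA, hB, hC⟩
      exact hexp.2 ⟨q, hq, hA, hB⟩
  · rintro ⟨⟨hsec', hsat'⟩, hNE⟩
    refine ⟨secOn_mono hsec' le_rfl (by omega), ?_⟩
    intro i j hai h2 hjb hnot hins
    by_cases hjn : j = n
    · subst hjn
      have hiexp : Expo P i := by
        constructor
        · intro q hq
          have hne : q ≠ (i, j) := fun h => hnot (h ▸ hq)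
          have hd := hins.2.1 q (Finset.mem_insert_of_mem hq) (i, j)
            (Finset.mem_insert_self _ _) hne
          exact ⟨hd.1, hd.2.2.1⟩
        · rintro ⟨q, hq, hc1, hc2⟩
          have hcr := hins.2.2 q (Finset.mem_insert_of_mem hq) (i, j)
            (Finset.mem_insert_self _ _)
          have hb := hsec'.1 q hq
          exact hcr ⟨hc1, hc2, by omega⟩
      exact hNE i hai (by omega) hiexp
    · refine hsat' i j hai h2 (by omega) hnot ?_
      refine ⟨fun q hq => ?_, hins.2.1, hins.2.2⟩
      rcases Finset.mem_insert.mp hq with rfl | hq'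
      · exact ⟨hai, h2, by omega⟩
      · exact hsec'.1 q hq' 

def shiftUp (k : ℕ) (B : Finset (ℕ × ℕ)) : Finset (ℕ × ℕ) :=
  B.image fun q => (q.1 + k, q.2 + k)

def shiftDown (k : ℕ) (B : Finset (ℕ × ℕ)) : Finset (ℕ × ℕ) :=
  B.image fun q => (q.1 - k, q.2 - k)

theorem shiftDown_shiftUp (k : ℕ) (B : Finset (ℕ × ℕ)) : shiftDown k (shiftUp k B) = B := by
  rw [shiftDown, shiftUp, Finset.image_image]
  have : ((fun q : ℕ × ℕ => (q.1 - k, q.2 - k)) ∘ fun q : ℕ × ℕ => (q.1 + k, q.2 + k)) = id := by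
    funext q; simp
  rw [this, Finset.image_id]

theorem shiftUp_shiftDown {k : ℕ} {B : Finset (ℕ × ℕ)} (h : ∀ q ∈ B, k ≤ q.1 ∧ k ≤ q.2) :
    shiftUp k (shiftDown k B) = B := by
  rw [shiftUp, shiftDown, Finset.image_image]
  have : Finset.image ((fun q : ℕ × ℕ => (q.1 + k, q.2 + k)) ∘ fun q : ℕ × ℕ => (q.1 - k, q.2 - k)) B
      = Finset.image id B := by
    refine Finset.image_congr fun q hq => ?_
    obtain ⟨x, y⟩ := q
    have := h (x, y) (Finset.mem_coe.mp hq)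
    simp only [Function.comp_apply, id_eq, Prod.mk.injEq] at this ⊢
    omega
  rw [this, Finset.image_id]

theorem secOn_shiftUp {a b k : ℕ} {B : Finset (ℕ × ℕ)} :
    SecOn a b B ↔ SecOn (a + k) (b + k) (shiftUp k B) := by
  constructor
  · intro h
    refine ⟨?_, ?_, ?_⟩
    · intro q' hq'
      obtain ⟨q, hq, rfl⟩ := Finset.mem_image.mp hq'
      have := h.1 q hq
      simp only
      omega
    · intro q' hq' r' hr' hne
      obtain ⟨q, hq, rfl⟩ := Finset.mem_image.mp hq'
      obtain ⟨r, hr, rfl⟩ := Finset.mem_image.mp hr'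
      have hqr : q ≠ r := fun he => hne (by rw [he])
      have := h.2.1 q hq r hr hqr
      simp only [Prod.mk.injEq] at hne ⊢
      omega
    · intro q' hq' r' hr'
      obtain ⟨q, hq, rfl⟩ := Finset.mem_image.mp hq'
      obtain ⟨r, hr, rfl⟩ := Finset.mem_image.mp hr'
      have := h.2.2 q hq r hr
      simp only
      omega
  · intro h
    refine ⟨?_, ?_, ?_⟩
    · intro q hq
      have := h.1 _ (Finset.mem_image_of_mem _ hq)
      simp only at this
      omega
    · intro q hq r hr hqr
      have hne : ((fun q : ℕ × ℕ => (q.1 + k, q.2 + k)) q) ≠ ((fun q : ℕ × ℕ => (q.1 + k, q.2 + k)) r) := by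
        simp only [Ne, Prod.mk.injEq, Prod.ext_iff] at hqr ⊢
        omega
      have := h.2.1 _ (Finset.mem_image_of_mem _ hq) _ (Finset.mem_image_of_mem _ hr) hne
      simp only at this
      omega
    · intro q hq r hr
      have := h.2.2 _ (Finset.mem_image_of_mem _ hq) _ (Finset.mem_image_of_mem _ hr)
      simp only at this
      omega

theorem satOn_shiftUp {a b k : ℕ} {B : Finset (ℕ × ℕ)} :
    SatOn a b B ↔ SatOn (a + k) (b + k) (shiftUp k B) := by
  constructor
  · rintro ⟨hsec, hsat⟩
    refine ⟨secOn_shiftUp.mp hsec, ?_⟩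
    intro i j hai h2 hjb hnot hins
    have hki : k ≤ i := by omega
    have hkj : k ≤ j := by omega
    have hnot0 : (i - k, j - k) ∉ B := by
      intro hm
      refine hnot ?_
      have : ((i - k) + k, (j - k) + k) ∈ shiftUp k B := Finset.mem_image_of_mem _ hm
      have he : ((i - k) + k, (j - k) + k) = (i, j) := by
        simp only [Prod.mk.injEq]; omega
      rwa [he] at this
    refine hsat (i - k) (j - k) (by omega) (by omega) (by omega) hnot0 ?_
    have hcomm : insert (i, j) (shiftUp k B) = shiftUp k (insert (i - k, j - k) B) := by
      simp only [shiftUp, Finset.image_insert]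
      congr 1
      simp only [Prod.mk.injEq]
      omega
    rw [hcomm] at hins
    exact secOn_shiftUp.mpr hins
  · rintro ⟨hsec, hsat⟩
    refine ⟨secOn_shiftUp.mpr hsec, ?_⟩
    intro i j hai h2 hjb hnot hins
    refine hsat (i + k) (j + k) (by omega) (by omega) (by omega) ?_ ?_
    · intro hm
      obtain ⟨q, hq, he⟩ := Finset.mem_image.mp hm
      obtain ⟨x, y⟩ := q
      have : (x, y) = (i, j) := by
        simp only [Prod.mk.injEq] at he ⊢
        omega
      exact hnot (this ▸ hq)
    · have hcomm : insert (i + k, j + k) (shiftUp k B) = shiftUp k (insert (i, j) B) := by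
        simp only [shiftUp, Finset.image_insert]
      rw [hcomm]
      exact secOn_shiftUp.mp hins

def joinkn (k n : ℕ) (A B : Finset (ℕ × ℕ)) : Finset (ℕ × ℕ) :=
  A ∪ insert (k, n) B

theorem secOn_join {k n : ℕ} (hk : 1 ≤ k) (hkn : k + 2 ≤ n) {A B : Finset (ℕ × ℕ)}
    (hA : ∀ q ∈ A, 1 ≤ q.1 ∧ q.1 + 2 ≤ q.2 ∧ q.2 + 1 ≤ k)
    (hB : ∀ q ∈ B, k + 1 ≤ q.1 ∧ q.1 + 2 ≤ q.2 ∧ q.2 + 1 ≤ n) :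
    SecOn 1 n (joinkn k n A B) ↔ SecOn 1 (k - 1) A ∧ SecOn (k + 1) (n - 1) B := by
  have hmemJ : ∀ q, q ∈ joinkn k n A B ↔ q ∈ A ∨ q = (k, n) ∨ q ∈ B := by
    intro q
    simp only [joinkn, Finset.mem_union, Finset.mem_insert]
  constructor
  · intro h
    constructor
    · refine secOn_subset h (fun q hq => (hmemJ q).mpr (Or.inl hq)) fun q hq => ?_
      have := hA q hq
      omega
    · refine secOn_subset h (fun q hq => (hmemJ q).mpr (Or.inr (Or.inr hq))) fun q hq => ?_
      have := hB q hq
      omega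
  · rintro ⟨h1, h2⟩
    refine ⟨?_, ?_, ?_⟩
    · intro q hq
      rcases (hmemJ q).mp hq with hq' | rfl | hq'
      · have := hA q hq'
        omega
      · exact ⟨hk, hkn, le_rfl⟩
      · have := hB q hq'
        omega
    · intro q hq r hr hne
      rcases (hmemJ q).mp hq with hq' | rfl | hq' <;> rcases (hmemJ r).mp hr with hr' | rfl | hr'
      · exact h1.2.1 q hq' r hr' hne
      · have := hA q hq'
        simp only
        omega
      · have h3 := hA q hq'
        have h4 := hB r hr'
        omega
      · have := hA r hr'
        simp only
        omega
      · exact absurd rfl hne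
      · have := hB r hr'
        simp only
        omega
      · have h3 := hB q hq'
        have h4 := hA r hr'
        omega
      · have := hB q hq'
        simp only
        omega
      · exact h2.2.1 q hq' r hr' hne
    · intro q hq r hr
      rcases (hmemJ q).mp hq with hq' | rfl | hq' <;> rcases (hmemJ r).mp hr with hr' | rfl | hr'
      · exact h1.2.2 q hq' r hr'
      · have := hA q hq'
        simp only
        omega
      · have h3 := hA q hq'
        have h4 := hB r hr'
        omega
      · have := hA r hr'
        simp only
        omega
      · simp only
        omega
      · have := hB r hr'
        simp only
        omega
      · have h3 := hB q hq'
        have h4 := hA r hr'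
        omega
      · have := hB q hq'
        simp only
        omega
      · exact h2.2.2 q hq' r hr'

theorem satOn_join {k n : ℕ} (hk : 1 ≤ k) (hkn : k + 2 ≤ n) {A B : Finset (ℕ × ℕ)}
    (hA : ∀ q ∈ A, 1 ≤ q.1 ∧ q.1 + 2 ≤ q.2 ∧ q.2 + 1 ≤ k)
    (hB : ∀ q ∈ B, k + 1 ≤ q.1 ∧ q.1 + 2 ≤ q.2 ∧ q.2 + 1 ≤ n) :
    SatOn 1 n (joinkn k n A B) ↔ SatOn 1 (k - 1) A ∧ SatOn (k + 1) (n - 1) B := by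
  have hmemJ : ∀ q, q ∈ joinkn k n A B ↔ q ∈ A ∨ q = (k, n) ∨ q ∈ B := by
    intro q
    simp only [joinkn, Finset.mem_union, Finset.mem_insert]
  have hsecJ : SecOn 1 n (joinkn k n A B) ↔ SecOn 1 (k - 1) A ∧ SecOn (k + 1) (n - 1) B :=
    secOn_join hk hkn hA hB
  constructor
  · rintro ⟨hsec, hsat⟩
    obtain ⟨hsA, hsB⟩ := hsecJ.mp hsec
    constructor
    · refine ⟨hsA, ?_⟩
      intro i j hai h2 hjb hnot hins
      have hA' : ∀ q ∈ insert (i, j) A, 1 ≤ q.1 ∧ q.1 + 2 ≤ q.2 ∧ q.2 + 1 ≤ k := by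
        intro q hq
        rcases Finset.mem_insert.mp hq with rfl | hq'
        · exact ⟨hai, h2, by omega⟩
        · exact hA q hq'
      refine hsat i j hai h2 (by omega) ?_ ?_
      · intro hm
        rcases (hmemJ (i, j)).mp hm with hm' | hm' | hm'
        · exact hnot hm'
        · simp only [Prod.mk.injEq] at hm'
          omega
        · have := hB (i, j) hm'
          simp only at this
          omega
      · have he : insert (i, j) (joinkn k n A B) = joinkn k n (insert (i, j) A) B := by
          ext q
          simp only [joinkn, Finset.mem_insert, Finset.mem_union]
          tauto
        rw [he]
        exact (secOn_join hk hkn hA' hB).mpr ⟨hins, hsB⟩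
    · refine ⟨hsB, ?_⟩
      intro i j hai h2 hjb hnot hins
      have hB' : ∀ q ∈ insert (i, j) B, k + 1 ≤ q.1 ∧ q.1 + 2 ≤ q.2 ∧ q.2 + 1 ≤ n := by
        intro q hq
        rcases Finset.mem_insert.mp hq with rfl | hq'
        · exact ⟨hai, h2, by omega⟩
        · exact hB q hq'
      refine hsat i j (by omega) h2 (by omega) ?_ ?_
      · intro hm
        rcases (hmemJ (i, j)).mp hm with hm' | hm' | hm'
        · have := hA (i, j) hm'
          simp only at this
          omega
        · simp only [Prod.mk.injEq] at hm'
          omega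
        · exact hnot hm'
      · have he : insert (i, j) (joinkn k n A B) = joinkn k n A (insert (i, j) B) := by
          ext q
          simp only [joinkn, Finset.mem_insert, Finset.mem_union]
          tauto
        rw [he]
        exact (secOn_join hk hkn hA hB').mpr ⟨hsA, hins⟩
  · rintro ⟨⟨hsA, hsatA⟩, ⟨hsB, hsatB⟩⟩
    refine ⟨hsecJ.mpr ⟨hsA, hsB⟩, ?_⟩
    intro i j hai h2 hjb hnot hins
    have hmemkn : (k, n) ∈ insert (i, j) (joinkn k n A B) :=
      Finset.mem_insert_of_mem ((hmemJ (k, n)).mpr (Or.inr (Or.inl rfl)))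
    have hne : (i, j) ≠ (k, n) := by
      intro h
      exact hnot (h ▸ (hmemJ (k, n)).mpr (Or.inr (Or.inl rfl)))
    have hd := hins.2.1 (i, j) (Finset.mem_insert_self _ _) (k, n) hmemkn hne
    have hc1 := hins.2.2 (i, j) (Finset.mem_insert_self _ _) (k, n) hmemkn
    have hc2 := hins.2.2 (k, n) hmemkn (i, j) (Finset.mem_insert_self _ _)
    simp only at hd hc1 hc2
    by_cases hjk : j < k
    · refine hsatA i j hai h2 (by omega)
        (fun hm => hnot ((hmemJ (i, j)).mpr (Or.inl hm))) ?_
      refine secOn_subset hins (Finset.insert_subset_insert _ ?_) ?_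
      · intro q hq
        exact (hmemJ q).mpr (Or.inl hq)
      · intro q hq
        rcases Finset.mem_insert.mp hq with rfl | hq'
        · exact ⟨hai, by omega⟩
        · have := hA q hq'
          omega
    · by_cases hki : k < i
      · refine hsatB i j (by omega) h2 (by omega)
          (fun hm => hnot ((hmemJ (i, j)).mpr (Or.inr (Or.inr hm)))) ?_
        refine secOn_subset hins (Finset.insert_subset_insert _ ?_) ?_
        · intro q hq
          exact (hmemJ q).mpr (Or.inr (Or.inr hq))
        · intro q hq
          rcases Finset.mem_insert.mp hq with rfl | hq'
          · exact ⟨by omega, by omega⟩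
          · have := hB q hq'
            omega
      · exfalso
        omega

theorem decomp_of_mem {n k : ℕ} {P : Finset (ℕ × ℕ)} (hsec : SecOn 1 n P)
    (hmem : (k, n) ∈ P) (hk : 1 ≤ k) (hkn : k + 2 ≤ n) :
    P = joinkn k n (P.filter fun q => q.2 < k) (P.filter fun q => k < q.1 ∧ q.2 < n) := by
  ext q
  simp only [joinkn, Finset.mem_union, Finset.mem_insert, Finset.mem_filter]
  constructor
  · intro hq
    rcases eq_or_ne q (k, n) with rfl | hne
    · exact Or.inr (Or.inl rfl)
    · have hd := hsec.2.1 q hq (k, n) hmem hne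
      have hb := hsec.1 q hq
      have hc1 := hsec.2.2 q hq (k, n) hmem
      have hc2 := hsec.2.2 (k, n) hmem q hq
      simp only at hd hc1 hc2
      have : q.2 < k ∨ (k < q.1 ∧ q.2 < n) := by omega
      rcases this with h | h
      · exact Or.inl ⟨hq, h⟩
      · exact Or.inr (Or.inr ⟨hq, h⟩)
  · rintro (⟨hq, _⟩ | rfl | ⟨hq, _⟩)
    · exact hq
    · exact hmem
    · exact hq

theorem noExp_join {k n : ℕ} (hk : 1 ≤ k) (hkn : k + 2 ≤ n) {A B : Finset (ℕ × ℕ)}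
    (hA : ∀ q ∈ A, 1 ≤ q.1 ∧ q.1 + 2 ≤ q.2 ∧ q.2 + 1 ≤ k)
    (hB : ∀ q ∈ B, k + 1 ≤ q.1 ∧ q.1 + 2 ≤ q.2 ∧ q.2 + 1 ≤ n) :
    NoExp n (joinkn k n A B) ↔ NoExp (k - 1) A := by
  have hmem : (k, n) ∈ joinkn k n A B := by
    simp [joinkn]
  constructor
  · intro hN m h1 hm hexp
    refine hN m h1 (by omega) ?_
    constructor
    · intro q hq
      rcases Finset.mem_union.mp hq with hqA | hqB
      · exact hexp.1 q hqA
      · rcases Finset.mem_insert.mp hqB with rfl | hqB'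
        · exact ⟨by omega, by omega⟩
        · have := hB q hqB'
          exact ⟨by omega, by omega⟩
    · rintro ⟨q, hq, hc1, hc2⟩
      rcases Finset.mem_union.mp hq with hqA | hqB
      · exact hexp.2 ⟨q, hqA, hc1, hc2⟩
      · rcases Finset.mem_insert.mp hqB with rfl | hqB'
        · simp only at hc1
          omega
        · have := hB q hqB'
          omega
  · intro hN m h1 hm hexp
    by_cases hmk : m ≤ k - 1
    · refine hN m h1 hmk ?_
      constructor
      · exact fun q hq => hexp.1 q (Finset.mem_union_left _ hq)
      · rintro ⟨q, hq, hc1, hc2⟩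
        exact hexp.2 ⟨q, Finset.mem_union_left _ hq, hc1, hc2⟩
    · have hd := hexp.1 (k, n) hmem
      simp only at hd
      exact hexp.2 ⟨(k, n), hmem, by omega, by omega⟩

/-! ### Counting layer -/

open scoped Classical in
noncomputable def satF (n : ℕ) : Finset (Finset (ℕ × ℕ)) :=
  ((Finset.Icc 1 n ×ˢ Finset.Icc 1 n).powerset).filter fun P => IsSaturated n P

open scoped Classical in
noncomputable def csatF (n : ℕ) : Finset (Finset (ℕ × ℕ)) :=
  ((Finset.Icc 1 n ×ˢ Finset.Icc 1 n).powerset).filter fun P => IsSaturated n P ∧ NoExp n P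

open scoped Classical in
noncomputable def vsatF (n : ℕ) : Finset (Finset (ℕ × ℕ)) :=
  ((Finset.Icc 1 n ×ˢ Finset.Icc 1 n).powerset).filter fun P =>
    IsSaturated n P ∧ NoExp (n - 1) P

theorem subset_ambient {n : ℕ} {P : Finset (ℕ × ℕ)} (h : IsSecStruct n P) :
    P ∈ (Finset.Icc 1 n ×ˢ Finset.Icc 1 n).powerset := by
  rw [Finset.mem_powerset]
  intro q hq
  have := h.1 q hq
  simp only [Finset.mem_product, Finset.mem_Icc]
  omega

theorem mem_satF {n : ℕ} {P : Finset (ℕ × ℕ)} : P ∈ satF n ↔ IsSaturated n P := by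
  classical
  simp only [satF, Finset.mem_filter, and_iff_right_iff_imp]
  exact fun h => subset_ambient h.1

theorem mem_csatF {n : ℕ} {P : Finset (ℕ × ℕ)} :
    P ∈ csatF n ↔ IsSaturated n P ∧ NoExp n P := by
  classical
  simp only [csatF, Finset.mem_filter, and_iff_right_iff_imp]
  exact fun h => subset_ambient h.1.1

theorem mem_vsatF {n : ℕ} {P : Finset (ℕ × ℕ)} :
    P ∈ vsatF n ↔ IsSaturated n P ∧ NoExp (n - 1) P := by
  classical
  simp only [vsatF, Finset.mem_filter, and_iff_right_iff_imp]
  exact fun h => subset_ambient h.1.1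

theorem satCount_eq_card (n : ℕ) : satCount n = (satF n).card := by
  have : {P : Finset (ℕ × ℕ) | IsSaturated n P} = ↑(satF n) := by
    ext P; simp [mem_satF]
  rw [satCount, this, Set.ncard_coe_finset]

theorem saturated_empty_zero : IsSaturated 0 (∅ : Finset (ℕ × ℕ)) := by
  constructor
  · exact ⟨fun q hq => absurd hq (Finset.notMem_empty q), fun q hq => absurd hq (Finset.notMem_empty q), fun q hq => absurd hq (Finset.notMem_empty q)⟩
  · intro q hq hsec
    have := hsec.1 q (Finset.mem_insert_self q ∅)
    omega

theorem satF_zero : satF 0 = {∅} := by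
  ext P
  simp only [mem_satF, Finset.mem_singleton]
  constructor
  · intro h
    by_contra hne
    obtain ⟨q, hq⟩ := Finset.nonempty_iff_ne_empty.2 hne
    have := h.1.1 q hq
    omega
  · rintro rfl; exact saturated_empty_zero

theorem csatF_zero : csatF 0 = {∅} := by
  ext P
  simp only [mem_csatF, Finset.mem_singleton]
  constructor
  · intro h
    by_contra hne
    obtain ⟨q, hq⟩ := Finset.nonempty_iff_ne_empty.2 hne
    have := h.1.1.1 q hq
    omega
  · rintro rfl
    exact ⟨saturated_empty_zero, fun m h1 h0 => by omega⟩

theorem vsatF_zero : vsatF 0 = {∅} := by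
  ext P
  simp only [mem_vsatF, Finset.mem_singleton]
  constructor
  · intro h
    by_contra hne
    obtain ⟨q, hq⟩ := Finset.nonempty_iff_ne_empty.2 hne
    have := h.1.1.1 q hq
    omega
  · rintro rfl
    exact ⟨saturated_empty_zero, fun m h1 h0 => by omega⟩

theorem satOn_shiftDown {k m : ℕ} {B : Finset (ℕ × ℕ)}
    (hcoord : ∀ q ∈ B, k ≤ q.1 ∧ k ≤ q.2) :
    SatOn 1 m (shiftDown k B) ↔ SatOn (1 + k) (m + k) B := by
  rw [satOn_shiftUp (k := k), shiftUp_shiftDown hcoord]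

/-- Bounds for the two filtered parts. -/
theorem filterA_bounds {n k : ℕ} {P : Finset (ℕ × ℕ)} (hsec : SecOn 1 n P) :
    ∀ q ∈ P.filter fun q => q.2 < k, 1 ≤ q.1 ∧ q.1 + 2 ≤ q.2 ∧ q.2 + 1 ≤ k := by
  intro q hq
  obtain ⟨hq1, hq2⟩ := Finset.mem_filter.mp hq
  have := hsec.1 q hq1
  omega

theorem filterB_bounds {n k : ℕ} {P : Finset (ℕ × ℕ)} (hsec : SecOn 1 n P) :
    ∀ q ∈ P.filter fun q => k < q.1 ∧ q.2 < n,
      k + 1 ≤ q.1 ∧ q.1 + 2 ≤ q.2 ∧ q.2 + 1 ≤ n := by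
  intro q hq
  obtain ⟨hq1, hq2⟩ := Finset.mem_filter.mp hq
  have := hsec.1 q hq1
  omega

theorem split_parts {n k : ℕ} {P : Finset (ℕ × ℕ)} (hk : 1 ≤ k) (hkn : k + 2 ≤ n)
    (hP : IsSaturated n P) (hmem : (k, n) ∈ P) :
    SatOn 1 (k - 1) (P.filter fun q => q.2 < k)
      ∧ SatOn (k + 1) (n - 1) (P.filter fun q => k < q.1 ∧ q.2 < n) := by
  have hsat := isSaturated_iff.mp hP
  have hdec := decomp_of_mem hsat.1 hmem hk hkn
  exact (satOn_join hk hkn (filterA_bounds hsat.1) (filterB_bounds hsat.1)).mp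
    (by rw [← hdec]; exact hsat)

theorem split_sat_A {n k : ℕ} {P : Finset (ℕ × ℕ)} (hk : 1 ≤ k) (hkn : k + 2 ≤ n)
    (hP : IsSaturated n P) (hmem : (k, n) ∈ P) :
    IsSaturated (k - 1) (P.filter fun q => q.2 < k) :=
  isSaturated_iff.mpr (split_parts hk hkn hP hmem).1

theorem split_sat_B {n k : ℕ} {P : Finset (ℕ × ℕ)} (hk : 1 ≤ k) (hkn : k + 2 ≤ n)
    (hP : IsSaturated n P) (hmem : (k, n) ∈ P) :
    IsSaturated (n - k - 1) (shiftDown k (P.filter fun q => k < q.1 ∧ q.2 < n)) := by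
  have h2 := (split_parts hk hkn hP hmem).2
  rw [isSaturated_iff]
  have hcoord : ∀ q ∈ P.filter fun q => k < q.1 ∧ q.2 < n, k ≤ q.1 ∧ k ≤ q.2 := by
    intro q hq
    have := filterB_bounds (isSaturated_iff.mp hP).1 q hq
    omega
  rw [satOn_shiftDown hcoord]
  have e1 : 1 + k = k + 1 := by omega
  have e2 : n - k - 1 + k = n - 1 := by omega
  rw [e1, e2]
  exact h2

theorem shiftUp_bounds {n k : ℕ} {B : Finset (ℕ × ℕ)} (hkn : k + 2 ≤ n)
    (hB : ∀ q ∈ B, 1 ≤ q.1 ∧ q.1 + 2 ≤ q.2 ∧ q.2 ≤ n - k - 1) :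
    ∀ q ∈ shiftUp k B, k + 1 ≤ q.1 ∧ q.1 + 2 ≤ q.2 ∧ q.2 + 1 ≤ n := by
  intro q hq
  obtain ⟨r, hr, rfl⟩ := Finset.mem_image.mp hq
  have := hB r hr
  simp only
  omega

theorem secOn_bounds {a b : ℕ} {P : Finset (ℕ × ℕ)} (h : SecOn a b P) :
    ∀ q ∈ P, a ≤ q.1 ∧ q.1 + 2 ≤ q.2 ∧ q.2 ≤ b := h.1

theorem join_sat {n k : ℕ} {A B : Finset (ℕ × ℕ)} (hk : 1 ≤ k) (hkn : k + 2 ≤ n)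
    (hA' : IsSaturated (k - 1) A) (hB' : IsSaturated (n - k - 1) B) :
    IsSaturated n (joinkn k n A (shiftUp k B)) := by
  have hA : ∀ q ∈ A, 1 ≤ q.1 ∧ q.1 + 2 ≤ q.2 ∧ q.2 + 1 ≤ k := by
    intro q hq
    have := hA'.1.1 q hq
    omega
  have hBs := shiftUp_bounds hkn (fun q hq => hB'.1.1 q hq)
  rw [isSaturated_iff]
  refine (satOn_join hk hkn hA hBs).mpr ⟨isSaturated_iff.mp hA', ?_⟩
  have hup := satOn_shiftUp (k := k) (a := 1) (b := n - k - 1)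
      (B := B) |>.mp (isSaturated_iff.mp hB')
  have e1 : 1 + k = k + 1 := by omega
  have e2 : n - k - 1 + k = n - 1 := by omega
  rwa [e1, e2] at hup

theorem join_recover {n k : ℕ} {A B : Finset (ℕ × ℕ)} (hk : 1 ≤ k) (hkn : k + 2 ≤ n)
    (hA : ∀ q ∈ A, 1 ≤ q.1 ∧ q.1 + 2 ≤ q.2 ∧ q.2 + 1 ≤ k)
    (hB : ∀ q ∈ B, 1 ≤ q.1 ∧ q.1 + 2 ≤ q.2 ∧ q.2 ≤ n - k - 1) :
    ((joinkn k n A (shiftUp k B)).filter fun q => q.2 < k) = A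
      ∧ ((joinkn k n A (shiftUp k B)).filter fun q => k < q.1 ∧ q.2 < n) = shiftUp k B := by
  have hBs := shiftUp_bounds hkn hB
  constructor
  · ext q
    simp only [Finset.mem_filter, joinkn, Finset.mem_union, Finset.mem_insert]
    constructor
    · rintro ⟨hq | rfl | hq, h2⟩
      · exact hq
      · simp only at h2
        omega
      · have := hBs q hq
        omega
    · intro hq
      have := hA q hq
      exact ⟨Or.inl hq, by omega⟩
  · ext q
    simp only [Finset.mem_filter, joinkn, Finset.mem_union, Finset.mem_insert]
    constructor
    · rintro ⟨hq | rfl | hq, h2⟩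
      · have := hA q hq
        omega
      · simp only at h2
        omega
      · exact hq
    · intro hq
      have := hBs q hq
      exact ⟨Or.inr (Or.inr hq), by omega⟩

theorem join_mem_kn {n k : ℕ} (A B : Finset (ℕ × ℕ)) : (k, n) ∈ joinkn k n A B := by
  simp [joinkn]

theorem card_satF_pair {n k : ℕ} (hk : 1 ≤ k) (hkn : k + 2 ≤ n) :
    (((satF n)).filter fun P => (k, n) ∈ P).card
      = (satF (k - 1)).card * (satF (n - k - 1)).card := by
  classical
  rw [← Finset.card_product]
  refine Finset.card_bij'
    (fun P _ => (P.filter fun q => q.2 < k, shiftDown k (P.filter fun q => k < q.1 ∧ q.2 < n)))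
    (fun A _ => joinkn k n A.1 (shiftUp k A.2)) ?_ ?_ ?_ ?_
  · intro P hP
    obtain ⟨hP1, hP2⟩ := Finset.mem_filter.mp hP
    have hPsat := mem_satF.mp hP1
    rw [Finset.mem_product]
    exact ⟨mem_satF.mpr (split_sat_A hk hkn hPsat hP2),
      mem_satF.mpr (split_sat_B hk hkn hPsat hP2)⟩
  · rintro ⟨A, B⟩ hAB
    rw [Finset.mem_product] at hAB
    have hA' := mem_satF.mp hAB.1
    have hB' := mem_satF.mp hAB.2
    rw [Finset.mem_filter]
    exact ⟨mem_satF.mpr (join_sat hk hkn hA' hB'), join_mem_kn A (shiftUp k B)⟩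
  · intro P hP
    obtain ⟨hP1, hP2⟩ := Finset.mem_filter.mp hP
    have hPsat := mem_satF.mp hP1
    have hsec := (isSaturated_iff.mp hPsat).1
    have hcoord : ∀ q ∈ P.filter fun q => k < q.1 ∧ q.2 < n, k ≤ q.1 ∧ k ≤ q.2 := by
      intro q hq
      have := filterB_bounds hsec q hq
      omega
    simp only
    rw [shiftUp_shiftDown hcoord]
    exact (decomp_of_mem hsec hP2 hk hkn).symm
  · rintro ⟨A, B⟩ hAB
    rw [Finset.mem_product] at hAB
    have hA' := mem_satF.mp hAB.1
    have hB' := mem_satF.mp hAB.2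
    have hA : ∀ q ∈ A, 1 ≤ q.1 ∧ q.1 + 2 ≤ q.2 ∧ q.2 + 1 ≤ k := by
      intro q hq
      have := hA'.1.1 q hq
      omega
    have hB : ∀ q ∈ B, 1 ≤ q.1 ∧ q.1 + 2 ≤ q.2 ∧ q.2 ≤ n - k - 1 := fun q hq => hB'.1.1 q hq
    have hrec := join_recover hk hkn hA hB
    simp only
    rw [hrec.1, hrec.2, shiftDown_shiftUp]

theorem noExp_split {n k : ℕ} {P : Finset (ℕ × ℕ)} (hk : 1 ≤ k) (hkn : k + 2 ≤ n)
    (hP : IsSaturated n P) (hmem : (k, n) ∈ P) :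
    (NoExp n P ↔ NoExp (k - 1) (P.filter fun q => q.2 < k)) := by
  have hsec := (isSaturated_iff.mp hP).1
  have hdec := decomp_of_mem hsec hmem hk hkn
  conv_lhs => rw [hdec]
  exact noExp_join hk hkn (filterA_bounds hsec) (filterB_bounds hsec)

theorem card_csatF_pair {n k : ℕ} (hk : 1 ≤ k) (hkn : k + 2 ≤ n) :
    (((csatF n)).filter fun P => (k, n) ∈ P).card
      = (csatF (k - 1)).card * (satF (n - k - 1)).card := by
  classical
  rw [← Finset.card_product]
  refine Finset.card_bij'
    (fun P _ => (P.filter fun q => q.2 < k, shiftDown k (P.filter fun q => k < q.1 ∧ q.2 < n)))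
    (fun A _ => joinkn k n A.1 (shiftUp k A.2)) ?_ ?_ ?_ ?_
  · intro P hP
    obtain ⟨hP1, hP2⟩ := Finset.mem_filter.mp hP
    obtain ⟨hPsat, hPne⟩ := mem_csatF.mp hP1
    rw [Finset.mem_product]
    exact ⟨mem_csatF.mpr ⟨split_sat_A hk hkn hPsat hP2,
        (noExp_split hk hkn hPsat hP2).mp hPne⟩,
      mem_satF.mpr (split_sat_B hk hkn hPsat hP2)⟩
  · rintro ⟨A, B⟩ hAB
    rw [Finset.mem_product] at hAB
    obtain ⟨hA', hAne⟩ := mem_csatF.mp hAB.1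
    have hB' := mem_satF.mp hAB.2
    rw [Finset.mem_filter]
    have hsat := join_sat hk hkn hA' hB'
    refine ⟨mem_csatF.mpr ⟨hsat, ?_⟩, join_mem_kn A (shiftUp k B)⟩
    have hA : ∀ q ∈ A, 1 ≤ q.1 ∧ q.1 + 2 ≤ q.2 ∧ q.2 + 1 ≤ k := by
      intro q hq
      have := hA'.1.1 q hq
      omega
    have hBs := shiftUp_bounds hkn (fun q hq => hB'.1.1 q hq)
    exact (noExp_join hk hkn hA hBs).mpr hAne
  · intro P hP
    obtain ⟨hP1, hP2⟩ := Finset.mem_filter.mp hP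
    obtain ⟨hPsat, _⟩ := mem_csatF.mp hP1
    have hsec := (isSaturated_iff.mp hPsat).1
    have hcoord : ∀ q ∈ P.filter fun q => k < q.1 ∧ q.2 < n, k ≤ q.1 ∧ k ≤ q.2 := by
      intro q hq
      have := filterB_bounds hsec q hq
      omega
    simp only
    rw [shiftUp_shiftDown hcoord]
    exact (decomp_of_mem hsec hP2 hk hkn).symm
  · rintro ⟨A, B⟩ hAB
    rw [Finset.mem_product] at hAB
    obtain ⟨hA', _⟩ := mem_csatF.mp hAB.1
    have hB' := mem_satF.mp hAB.2
    have hA : ∀ q ∈ A, 1 ≤ q.1 ∧ q.1 + 2 ≤ q.2 ∧ q.2 + 1 ≤ k := by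
      intro q hq
      have := hA'.1.1 q hq
      omega
    have hB : ∀ q ∈ B, 1 ≤ q.1 ∧ q.1 + 2 ≤ q.2 ∧ q.2 ≤ n - k - 1 := fun q hq => hB'.1.1 q hq
    have hrec := join_recover hk hkn hA hB
    simp only
    rw [hrec.1, hrec.2, shiftDown_shiftUp]

theorem expo_top {n : ℕ} {P : Finset (ℕ × ℕ)} (hsec : SecOn 1 n P)
    (hu : ∀ q ∈ P, q.2 ≠ n) : Expo P n := by
  constructor
  · intro q hq
    have := hsec.1 q hq
    have := hu q hq
    omega
  · rintro ⟨q, hq, h1, h2⟩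
    have := hsec.1 q hq
    omega

theorem mem_unpaired_vsatF {n : ℕ} (hn : 1 ≤ n) {P : Finset (ℕ × ℕ)} :
    (IsSaturated n P ∧ ∀ q ∈ P, q.2 ≠ n) ↔ (IsSaturated (n - 1) P ∧ NoExp (n - 1 - 1) P) := by
  constructor
  · rintro ⟨hP, hu⟩
    have h := (sat_last_unpaired hn hu).mp (isSaturated_iff.mp hP)
    refine ⟨isSaturated_iff.mpr h.1, ?_⟩
    rw [Nat.sub_sub]
    exact h.2
  · rintro ⟨hP, hne⟩
    have hu : ∀ q ∈ P, q.2 ≠ n := by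
      intro q hq
      have := (isSaturated_iff.mp hP).1.1 q hq
      omega
    have e : n - 1 - 1 = n - 2 := by omega
    rw [e] at hne
    exact ⟨isSaturated_iff.mpr ((sat_last_unpaired hn hu).mpr
      ⟨isSaturated_iff.mp hP, hne⟩), hu⟩

theorem pair_disjoint {n : ℕ} {F : Finset (Finset (ℕ × ℕ))}
    (hF : ∀ P ∈ F, IsSecStruct n P) :
    ∀ x ∈ Finset.Icc 1 (n - 2), ∀ y ∈ Finset.Icc 1 (n - 2), x ≠ y →
      Disjoint (F.filter fun P => (x, n) ∈ P) (F.filter fun P => (y, n) ∈ P) := by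
  classical
  intro x _ y _ hxy
  rw [Finset.disjoint_left]
  intro P hP1 hP2
  obtain ⟨hPF, hx⟩ := Finset.mem_filter.mp hP1
  obtain ⟨_, hy⟩ := Finset.mem_filter.mp hP2
  have hne : (x, n) ≠ (y, n) := by
    simp only [Ne, Prod.mk.injEq]
    omega
  have := (hF P hPF).2.1 (x, n) hx (y, n) hy hne
  simp only at this
  omega

theorem N2 {n : ℕ} (hn : 1 ≤ n) :
    (satF n).card
      = (vsatF (n - 1)).card
        + ∑ k ∈ Finset.Icc 1 (n - 2), (satF (k - 1)).card * (satF (n - k - 1)).card := by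
  classical
  have hpart : satF n = ((satF n).filter fun P => ∀ q ∈ P, q.2 ≠ n)
      ∪ (Finset.Icc 1 (n - 2)).biUnion fun k => (satF n).filter fun P => (k, n) ∈ P := by
    ext P
    simp only [Finset.mem_union, Finset.mem_biUnion, Finset.mem_filter, Finset.mem_Icc]
    constructor
    · intro hP
      by_cases hu : ∀ q ∈ P, q.2 ≠ n
      · exact Or.inl ⟨hP, hu⟩
      · push_neg at hu
        obtain ⟨q, hq, hq2⟩ := hu
        have hb := (mem_satF.mp hP).1.1 q hq
        obtain ⟨q1, q2⟩ := q
        simp only at hq2 hb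
        subst hq2
        exact Or.inr ⟨q1, ⟨by omega, by omega⟩, hP, hq⟩
    · rintro (⟨hP, _⟩ | ⟨k, _, hP, _⟩) <;> exact hP
  rw [hpart, Finset.card_union_of_disjoint, Finset.card_biUnion]
  · congr 1
    · have he : ((satF n).filter fun P => ∀ q ∈ P, q.2 ≠ n) = vsatF (n - 1) := by
        ext P
        simp only [Finset.mem_filter, mem_satF, mem_vsatF]
        exact mem_unpaired_vsatF hn
      rw [he]
    · refine Finset.sum_congr rfl fun k hk => ?_
      obtain ⟨h1, h2⟩ := Finset.mem_Icc.mp hk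
      exact card_satF_pair h1 (by omega)
  · exact pair_disjoint fun P hP => (mem_satF.mp hP).1
  · rw [Finset.disjoint_left]
    intro P hP1 hP2
    obtain ⟨_, hu⟩ := Finset.mem_filter.mp hP1
    obtain ⟨k, _, hk⟩ := Finset.mem_biUnion.mp hP2
    exact hu (k, n) (Finset.mem_filter.mp hk).2 rfl

theorem N3 {n : ℕ} (hn : 1 ≤ n) :
    (csatF n).card
      = ∑ k ∈ Finset.Icc 1 (n - 2), (csatF (k - 1)).card * (satF (n - k - 1)).card := by
  classical
  have hpart : csatF n
      = (Finset.Icc 1 (n - 2)).biUnion fun k => (csatF n).filter fun P => (k, n) ∈ P := by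
    ext P
    simp only [Finset.mem_biUnion, Finset.mem_filter, Finset.mem_Icc]
    constructor
    · intro hP
      obtain ⟨hPsat, hPne⟩ := mem_csatF.mp hP
      by_cases hu : ∀ q ∈ P, q.2 ≠ n
      · exact absurd (expo_top (isSaturated_iff.mp hPsat).1 hu)
          (hPne n hn le_rfl)
      · push_neg at hu
        obtain ⟨q, hq, hq2⟩ := hu
        have hb := hPsat.1.1 q hq
        obtain ⟨q1, q2⟩ := q
        simp only at hq2 hb
        subst hq2
        exact ⟨q1, ⟨by omega, by omega⟩, hP, hq⟩
    · rintro ⟨k, _, hP, _⟩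
      exact hP
  rw [hpart, Finset.card_biUnion (pair_disjoint fun P hP => (mem_csatF.mp hP).1.1)]
  refine Finset.sum_congr rfl fun k hk => ?_
  obtain ⟨h1, h2⟩ := Finset.mem_Icc.mp hk
  exact card_csatF_pair h1 (by omega)

theorem N4 {n : ℕ} (hn : 1 ≤ n) :
    (vsatF n).card = (csatF (n - 1)).card + (csatF n).card := by
  classical
  rw [← Finset.filter_union_filter_not_eq (fun P => ∀ q ∈ P, q.2 ≠ n) (vsatF n),
    Finset.card_union_of_disjoint (Finset.disjoint_filter_filter_not _ _ _)]
  have e1 : (vsatF n).filter (fun P => ∀ q ∈ P, q.2 ≠ n) = csatF (n - 1) := by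
    ext P
    simp only [Finset.mem_filter, mem_vsatF, mem_csatF]
    constructor
    · rintro ⟨⟨hP, hne⟩, hu⟩
      have h := (mem_unpaired_vsatF hn).mp ⟨hP, hu⟩
      exact ⟨h.1, hne⟩
    · rintro ⟨hP, hne⟩
      have hu : ∀ q ∈ P, q.2 ≠ n := by
        intro q hq
        have := (isSaturated_iff.mp hP).1.1 q hq
        omega
      have h := (mem_unpaired_vsatF hn).mpr ⟨hP, noExp_mono hne (by omega)⟩
      exact ⟨⟨h.1, hne⟩, hu⟩
  have e2 : (vsatF n).filter (fun P => ¬ ∀ q ∈ P, q.2 ≠ n) = csatF n := by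
    ext P
    simp only [Finset.mem_filter, mem_vsatF, mem_csatF]
    constructor
    · rintro ⟨⟨hP, hne⟩, hu⟩
      push_neg at hu
      obtain ⟨q, hq, hq2⟩ := hu
      refine ⟨hP, fun m h1 hm hexp => ?_⟩
      by_cases hmn : m ≤ n - 1
      · exact hne m h1 hmn hexp
      · have hmn' : m = n := by omega
        subst hmn'
        exact (hexp.1 q hq).2 hq2
    · rintro ⟨hP, hne⟩
      refine ⟨⟨hP, noExp_mono hne (by omega)⟩, ?_⟩
      intro hu
      exact hne n hn le_rfl (expo_top (isSaturated_iff.mp hP).1 hu)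
  rw [e1, e2]

/-! ### Generating function layer -/

noncomputable def Cgf : PowerSeries ℚ := PowerSeries.mk fun n => ((csatF n).card : ℚ)

theorem coeff_Sgf (n : ℕ) :
    (PowerSeries.coeff n) Sgf = if n = 0 then 0 else ((satF n).card : ℚ) := by
  rw [Sgf, PowerSeries.coeff_mk]
  split <;> simp [satCount_eq_card]

theorem coeff_one_add_Sgf (n : ℕ) :
    (PowerSeries.coeff n) (1 + Sgf) = ((satF n).card : ℚ) := by
  rcases Nat.eq_zero_or_pos n with rfl | hn
  · rw [map_add]
    simp [Sgf, satF_zero, PowerSeries.coeff_mk]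
  · rw [map_add, coeff_Sgf, PowerSeries.coeff_one, if_neg (by omega), if_neg (by omega)]
    ring

theorem sum_helper (m : ℕ) (F G : ℕ → ℚ) (hG : G 0 = 0) :
    ∑ p ∈ Finset.HasAntidiagonal.antidiagonal m, F p.1 * G p.2
      = ∑ k ∈ Finset.Icc 1 m, F (k - 1) * G (m + 1 - k) := by
  have himg : Finset.Icc 1 m = (Finset.range m).image (· + 1) := by
    ext x
    simp only [Finset.mem_Icc, Finset.mem_image, Finset.mem_range]
    constructor
    · intro h; exact ⟨x - 1, by omega, by omega⟩
    · rintro ⟨a, ha, h2⟩; omega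
  rw [Finset.Nat.sum_antidiagonal_eq_sum_range_succ (fun a b => F a * G b),
    Finset.sum_range_succ, himg, Finset.sum_image (fun a _ b _ h => by simpa using h)]
  simp only [Nat.sub_self, hG, mul_zero, add_zero]
  refine Finset.sum_congr rfl fun i hi => ?_
  have hi' := Finset.mem_range.mp hi
  congr 1 <;> congr 1 <;> omega

theorem coeff_Cgf (n : ℕ) : (PowerSeries.coeff n) Cgf = ((csatF n).card : ℚ) :=
  PowerSeries.coeff_mk n _

theorem conv_coeff (m : ℕ) (f g : PowerSeries ℚ) (F : ℕ → ℕ)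
    (hf : ∀ i, (PowerSeries.coeff i) f = (F i : ℚ))
    (hg : ∀ i, (PowerSeries.coeff i) g
        = if i = 0 then 0 else ((satF i).card : ℚ)) :
    (PowerSeries.coeff (m + 2)) ((X : PowerSeries ℚ) ^ 2 * (f * g))
      = ∑ k ∈ Finset.Icc 1 m, ((F (k - 1) * (satF (m + 1 - k)).card : ℕ) : ℚ) := by
  rw [PowerSeries.coeff_X_pow_mul, PowerSeries.coeff_mul]
  have := sum_helper m (fun i => (F i : ℚ))
      (fun i => if i = 0 then 0 else ((satF i).card : ℚ)) (by simp)
  simp only [hf, hg]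
  rw [this]
  refine Finset.sum_congr rfl fun k hk => ?_
  have hk' := Finset.mem_Icc.mp hk
  beta_reduce
  rw [if_neg (by omega)]
  push_cast
  ring

theorem EqB : Cgf = 1 + (X : PowerSeries ℚ) ^ 2 * (Cgf * Sgf) := by
  ext n
  rw [map_add]
  match n with
  | 0 => simp [coeff_Cgf, csatF_zero]
  | 1 =>
    rw [PowerSeries.coeff_X_pow_mul']
    simp [coeff_Cgf, N3 (le_refl 1), PowerSeries.coeff_one]
  | (m + 2) =>
    rw [conv_coeff m Cgf Sgf (fun i => (csatF i).card) coeff_Cgf coeff_Sgf,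
      PowerSeries.coeff_one, if_neg (by omega), zero_add, coeff_Cgf,
      N3 (show 1 ≤ m + 2 by omega)]
    have : ∀ k ∈ Finset.Icc 1 (m + 2 - 2),
        (csatF (k - 1)).card * (satF (m + 2 - k - 1)).card
          = (csatF (k - 1)).card * (satF (m + 1 - k)).card := by
      intro k hk
      have hk' := Finset.mem_Icc.mp hk
      have he : m + 2 - k - 1 = m + 1 - k := by omega
      rw [he]
    rw [Finset.sum_congr (show Finset.Icc 1 (m + 2 - 2) = Finset.Icc 1 m by simp) this]
    push_cast
    rfl

theorem EqA : Sgf = (X : PowerSeries ℚ) * Cgf + (X : PowerSeries ℚ) ^ 2 * Cgf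
    + (X : PowerSeries ℚ) ^ 2 * ((1 + Sgf) * Sgf) := by
  ext n
  rw [map_add, map_add]
  match n with
  | 0 => simp [Sgf, coeff_Cgf]
  | 1 =>
    rw [PowerSeries.coeff_X_pow_mul', PowerSeries.coeff_X_pow_mul']
    have h1 : (PowerSeries.coeff 1) ((X : PowerSeries ℚ) * Cgf)
        = (PowerSeries.coeff 0) Cgf := by
      simpa using PowerSeries.coeff_X_pow_mul Cgf 1 0
    rw [h1]
    simp only [coeff_Sgf, coeff_Cgf, csatF_zero, if_neg (one_ne_zero)]
    rw [N2 (le_refl 1)]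
    simp [vsatF_zero]
  | (m + 2) =>
    have h1 : (PowerSeries.coeff (m + 2)) ((X : PowerSeries ℚ) * Cgf)
        = (PowerSeries.coeff (m + 1)) Cgf := by
      simpa using PowerSeries.coeff_X_pow_mul Cgf 1 (m + 1)
    rw [h1, PowerSeries.coeff_X_pow_mul,
      conv_coeff m (1 + Sgf) Sgf (fun i => (satF i).card) coeff_one_add_Sgf coeff_Sgf,
      coeff_Sgf, if_neg (by omega), coeff_Cgf, coeff_Cgf,
      N2 (show 1 ≤ m + 2 by omega)]
    have h2 : (m + 2 : ℕ) - 1 = m + 1 := by omega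
    rw [h2, N4 (show 1 ≤ m + 1 by omega)]
    have h3 : (m + 1 : ℕ) - 1 = m := by omega
    rw [h3]
    have : ∀ k ∈ Finset.Icc 1 (m + 2 - 2),
        (satF (k - 1)).card * (satF (m + 2 - k - 1)).card
          = (satF (k - 1)).card * (satF (m + 1 - k)).card := by
      intro k hk
      have hk' := Finset.mem_Icc.mp hk
      have he : m + 2 - k - 1 = m + 1 - k := by omega
      rw [he]
    rw [Finset.sum_congr (show Finset.Icc 1 (m + 2 - 2) = Finset.Icc 1 m by simp) this]
    push_cast
    ring



end SatAux

/-- the generating function of saturated secondary structures satisfies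
`−S(z)³z⁴ − S(z)²z²(−2+z²) + S(z)(−1+z²) + z(1+z) = 0` as formal power series over ℚ. -/
theorem sat_struct_algebraic_equation :
    -Sgf ^ 3 * (X : PowerSeries ℚ) ^ 4 - Sgf ^ 2 * X ^ 2 * (-2 + X ^ 2)
      + Sgf * (-1 + X ^ 2) + X * (1 + X) = 0 := by
  have eqA := SatAux.EqA
  have eqB := SatAux.EqB
  linear_combination (X ^ 2 * Sgf - 1) * eqA - (X * (1 + X)) * eqB
end
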